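/- If ¬(ℓ ≤ ℓ') in the security semilattice L, then there is no natural transformation from the functor T_ℓ to the functor T_ℓ' on the category of L-levelled games and strategies; i.e., there is no family of strategies τ_A : T_ℓ A → T_ℓ' A indexed by L-levelled games A such that for every strategy σ : A → B one has (T_ℓ σ) ; τ_B = τ_A ; (T_ℓ' σ). -/

import Mathlib

/- Justified AJM games with security levels (levelled games), after
   Abramsky's "Semantics of access control / games" paper. -/

namespace AJM

inductive Pol where
  | P
  | O
deriving DecidableEq

inductive QA where
  | Q
  | Ans
deriving DecidableEq

def Pol.flip : Pol → Pol
  | .P => .O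
  | .O => .P

/-- Well-bracketed strings over moves (condition (p4)): built from
matching question/answer pairs, nesting and concatenation. -/
inductive WB {M : Type} (lab : M → Pol × QA) (just : M → Option M) : List M → Prop
  | nil : WB lab just []
  | wrap (a q : M) (u : List M) : (lab a).2 = QA.Ans → just a = some q →
      WB lab just u → WB lab just (q :: (u ++ [a]))
  | append (u v : List M) : WB lab just u → WB lab just v → WB lab just (u ++ v)

/-- Conditions (p1)–(p5): Opponent starts, alternation, linearity,
well-bracketing, justifiers occur before their moves. -/
def ValidSeq {M : Type} (lab : M → Pol × QA) (just : M → Option M) (s : List M) : Prop :=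
  (∀ m, s.head? = some m → (lab m).1 = Pol.O) ∧
  List.Chain' (fun m m' => (lab m).1 ≠ (lab m').1) s ∧
  s.Nodup ∧
  (∃ t, s <+: t ∧ WB lab just t) ∧
  (∀ s₁ m s₂, s = s₁ ++ m :: s₂ → ∀ m', just m = some m' → m' ∈ s₁)

/-- Condition (p6): a non-initial move may only be played if its level is
below (i.e. at least as trusted as) the level of its justifier. -/
def LevelOK {M L : Type} [SemilatticeSup L] (lev : M → L) (just : M → Option M)
    (s : List M) : Prop :=
  ∀ m ∈ s, ∀ m', just m = some m' → lev m ≤ lev m'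

variable (L : Type) [SemilatticeSup L] [OrderBot L]

/-- An `L`-levelled justified AJM game (the data). -/
structure LGame where
  M : Type
  lab : M → Pol × QA
  just : M → Option M
  lev : M → L
  pos : Set (List M)
  equiv : List M → List M → Prop

variable {L}

namespace LGame

/-- The axioms making the data of an `LGame` an actual levelled justified AJM game. -/
structure Valid (A : LGame L) : Prop where
  just_wf : WellFounded fun m m' : A.M => A.just m' = some m
  just_pol : ∀ m m', A.just m = some m' → (A.lab m).1 ≠ (A.lab m').1
  just_qa : ∀ m m', A.just m = some m' → (A.lab m).2 = QA.Ans → (A.lab m').2 = QA.Q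
  ans_justified : ∀ m, (A.lab m).2 = QA.Ans → A.just m ≠ none
  pos_nonempty : A.pos.Nonempty
  pos_prefix_closed : ∀ s t : List A.M, s <+: t → t ∈ A.pos → s ∈ A.pos
  pos_valid : ∀ s ∈ A.pos, ValidSeq A.lab A.just s
  pos_level : ∀ s ∈ A.pos, LevelOK A.lev A.just s
  equiv_mem : ∀ s t, A.equiv s t → s ∈ A.pos ∧ t ∈ A.pos
  equiv_refl : ∀ s ∈ A.pos, A.equiv s s
  equiv_symm : ∀ s t, A.equiv s t → A.equiv t s
  equiv_trans : ∀ s t u, A.equiv s t → A.equiv t u → A.equiv s u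
  equiv_lab : ∀ s t, A.equiv s t → s.map A.lab = t.map A.lab
  equiv_prefix : ∀ s t s' t', A.equiv s t → s' <+: s → t' <+: t →
      s'.length = t'.length → A.equiv s' t'
  equiv_ext : ∀ s t a, A.equiv s t → s ++ [a] ∈ A.pos → ∃ b, A.equiv (s ++ [a]) (t ++ [b])

/-- A strategy on a game: a non-empty set of even-length positions that is
causally consistent, representation independent and deterministic. -/
structure IsStrategy (A : LGame L) (σ : Set (List A.M)) : Prop where
  subset_pos : σ ⊆ A.pos
  even_length : ∀ s ∈ σ, Even s.length
  nonempty : σ.Nonempty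
  causal : ∀ s a b, s ++ [a, b] ∈ σ → s ∈ σ
  repind : ∀ s t, s ∈ σ → A.equiv s t → t ∈ σ
  det : ∀ s t a b a' b', s ++ [a, b] ∈ σ → t ++ [a', b'] ∈ σ →
      A.equiv (s ++ [a]) (t ++ [a']) → A.equiv (s ++ [a, b]) (t ++ [a', b'])

/-- A total strategy responds to every Opponent extension of one of its plays. -/
def Total (A : LGame L) (σ : Set (List A.M)) : Prop :=
  ∀ s ∈ σ, ∀ a, s ++ [a] ∈ A.pos → ∃ b, s ++ [a, b] ∈ σ

/-- Initial (justifier-less) moves of a game. -/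
def Init (A : LGame L) : Type := {m : A.M // A.just m = none}

/-- The level monad `T_ℓ`: bump every level by `⊔ ℓ`, all else unchanged. -/
def T (ℓ : L) (A : LGame L) : LGame L :=
  { A with lev := fun m => A.lev m ⊔ ℓ }

/-- Level(A): the set of levels of initial moves. -/
def LevelSet (A : LGame L) : Set L := {ℓ | ∃ m : A.M, A.just m = none ∧ A.lev m = ℓ}

/-- A ▷ B. -/
def Rhd (A B : LGame L) : Prop := ∀ ℓ ∈ LevelSet A, ∀ ℓ' ∈ LevelSet B, ¬ℓ ≤ ℓ'

/-- `A` is protected at level `ℓ`. -/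
def Protected (A : LGame L) (ℓ : L) : Prop := ∀ ℓ' ∈ LevelSet A, ℓ ≤ ℓ'

/-- The tensor unit `I`: the empty game. -/
def iGame : LGame L where
  M := Empty
  lab := fun m => m.elim
  just := fun m => m.elim
  lev := fun m => m.elim
  pos := {[]}
  equiv := fun s t => s = [] ∧ t = []

/- ### Tensor -/

def restL {α β : Type} (s : List (α ⊕ β)) : List α := s.filterMap Sum.getLeft?

def restR {α β : Type} (s : List (α ⊕ β)) : List β := s.filterMap Sum.getRight?

def tlab (A B : LGame L) : A.M ⊕ B.M → Pol × QA := Sum.elim A.lab B.lab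

def tjust (A B : LGame L) : A.M ⊕ B.M → Option (A.M ⊕ B.M)
  | .inl a => (A.just a).map .inl
  | .inr b => (B.just b).map .inr

def tlev (A B : LGame L) : A.M ⊕ B.M → L := Sum.elim A.lev B.lev

def tpos (A B : LGame L) : Set (List (A.M ⊕ B.M)) :=
  {s | ValidSeq (tlab A B) (tjust A B) s ∧ LevelOK (tlev A B) (tjust A B) s ∧
       restL s ∈ A.pos ∧ restR s ∈ B.pos}

/-- Tensor product of levelled games. -/
def tensor (A B : LGame L) : LGame L where
  M := A.M ⊕ B.M
  lab := tlab A B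
  just := tjust A B
  lev := tlev A B
  pos := tpos A B
  equiv := fun s t => s ∈ tpos A B ∧ t ∈ tpos A B ∧
    A.equiv (restL s) (restL t) ∧ B.equiv (restR s) (restR t) ∧
    s.map Sum.isLeft = t.map Sum.isLeft

/- ### Additive conjunction -/

def wpos (A B : LGame L) : Set (List (A.M ⊕ B.M)) :=
  (List.map Sum.inl '' A.pos) ∪ (List.map Sum.inr '' B.pos)

/-- The additive conjunction `A & B`. -/
def wand (A B : LGame L) : LGame L where
  M := A.M ⊕ B.M
  lab := tlab A B
  just := tjust A B
  lev := tlev A B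
  pos := wpos A B
  equiv := fun s t =>
    (∃ s' t', A.equiv s' t' ∧ s = s'.map Sum.inl ∧ t = t'.map Sum.inl) ∨
    (∃ s' t', B.equiv s' t' ∧ s = s'.map Sum.inr ∧ t = t'.map Sum.inr)

/- ### Bang -/

def bjust (A : LGame L) : ℕ × A.M → Option (ℕ × A.M)
  | (i, m) => (A.just m).map fun m' => (i, m')

def bresti (A : LGame L) (i : ℕ) (s : List (ℕ × A.M)) : List A.M :=
  s.filterMap fun p => if p.1 = i then some p.2 else none

def bpos (A : LGame L) : Set (List (ℕ × A.M)) :=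
  {s | ValidSeq (fun p => A.lab p.2) (bjust A) s ∧
       LevelOK (fun p => A.lev p.2) (bjust A) s ∧ ∀ i, bresti A i s ∈ A.pos}

/-- The exponential `!A`. -/
def bang (A : LGame L) : LGame L where
  M := ℕ × A.M
  lab := fun p => A.lab p.2
  just := bjust A
  lev := fun p => A.lev p.2
  pos := bpos A
  equiv := fun s t => s ∈ bpos A ∧ t ∈ bpos A ∧ ∃ π : Equiv.Perm ℕ,
    (∀ i, A.equiv (bresti A i s) (bresti A (π i) t)) ∧
    s.map (fun p => π p.1) = t.map Prod.fst

/- ### Linear implication -/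

/-- Moves of `A ⊸ B`: a copy of `M_A` for each initial move of `B`, plus `M_B`. -/
abbrev hM (A B : LGame L) : Type := (B.Init × A.M) ⊕ B.M

def hlab (A B : LGame L) : hM A B → Pol × QA
  | .inl (_, a) => ((A.lab a).1.flip, (A.lab a).2)
  | .inr b => B.lab b

def hjust (A B : LGame L) : hM A B → Option (hM A B)
  | .inl (b, a) =>
      match A.just a with
      | some a' => some (.inl (b, a'))
      | none => some (.inr b.1)
  | .inr b => (B.just b).map .inr

def hlev (A B : LGame L) : hM A B → L
  | .inl (_, a) => A.lev a
  | .inr b => B.lev b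

/-- Restriction to `A` (erasing copy tags). -/
def hrestA (A B : LGame L) (s : List (hM A B)) : List A.M :=
  s.filterMap fun m => match m with
    | .inl (_, a) => some a
    | .inr _ => none

/-- Restriction to `B`. -/
def hrestB (A B : LGame L) (s : List (hM A B)) : List B.M :=
  s.filterMap fun m => match m with
    | .inl _ => none
    | .inr b => some b

-- Restriction to the `b`-th copy of `A`.
open Classical in
noncomputable def hrestAb (A B : LGame L) (b : B.Init) (s : List (hM A B)) : List A.M :=
  s.filterMap fun m => match m with
    | .inl (b', a) => if b' = b then some a else none
    | .inr _ => none

def htag (A B : LGame L) : hM A B → Option B.Init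
  | .inl (b, _) => some b
  | .inr _ => none

def hpos (A B : LGame L) : Set (List (hM A B)) :=
  {s | ValidSeq (hlab A B) (hjust A B) s ∧ LevelOK (hlev A B) (hjust A B) s ∧
       hrestA A B s ∈ A.pos ∧ hrestB A B s ∈ B.pos}

/-- The linear implication game `A ⊸ B`. -/
noncomputable def lhom (A B : LGame L) : LGame L where
  M := hM A B
  lab := hlab A B
  just := hjust A B
  lev := hlev A B
  pos := hpos A B
  equiv := fun s t => s ∈ hpos A B ∧ t ∈ hpos A B ∧
    (∀ b : B.Init, A.equiv (hrestAb A B b s) (hrestAb A B b t)) ∧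
    B.equiv (hrestB A B s) (hrestB A B t) ∧
    s.map (htag A B) = t.map (htag A B)

/- ### Copy-cat strategies -/

/-- The copy-cat play set on `A ⊸ B`, along a renaming `f` of the moves of `B`
as moves of `A` (use `f = id` when `B` has the same moves as `A`):
even-length positions whose two restrictions are `≈_A`-equivalent. -/
def copycat (A B : LGame L) (f : B.M → A.M) : Set (List (hM A B)) :=
  {s | s ∈ hpos A B ∧ Even s.length ∧ A.equiv (hrestA A B s) ((hrestB A B s).map f)}

/-- Copy-cat plays that are only required to be legal in the *unlevelled* sense
(conditions (p1)–(p5) plus membership of the restrictions), i.e. without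
imposing the Level condition (p6). -/
def copycatRaw (A B : LGame L) (f : B.M → A.M) : Set (List (hM A B)) :=
  {s | ValidSeq (hlab A B) (hjust A B) s ∧ hrestA A B s ∈ A.pos ∧ hrestB A B s ∈ B.pos ∧
       Even s.length ∧ A.equiv (hrestA A B s) ((hrestB A B s).map f)}

/- ### Composition -/

/-- Moves of the interaction arena `(A ⊸ B) ⊸ C`. -/
abbrev cM (A B C : LGame L) : Type := (C.Init × hM A B) ⊕ C.M

def crestAB (A B C : LGame L) (s : List (cM A B C)) : List (hM A B) :=
  s.filterMap fun m => match m with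
    | .inl (_, x) => some x
    | .inr _ => none

def crestBC (A B C : LGame L) (s : List (cM A B C)) : List (hM B C) :=
  s.filterMap fun m => match m with
    | .inl (c, .inr b) => some (.inl (c, b))
    | .inl (_, .inl _) => none
    | .inr m' => some (.inr m')

def crestAC (A B C : LGame L) (s : List (cM A B C)) : List (hM A C) :=
  s.filterMap fun m => match m with
    | .inl (c, .inl (_, a)) => some (.inl (c, a))
    | .inl (_, .inr _) => none
    | .inr m' => some (.inr m')

/-- Composition of strategies `σ : A → B` and `τ : B → C`: parallel
composition plus hiding. -/
def comp (A B C : LGame L) (σ : Set (List (hM A B))) (τ : Set (List (hM B C))) :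
    Set (List (hM A C)) :=
  {u | ∃ s : List (cM A B C), u = crestAC A B C s ∧
        crestAB A B C s ∈ σ ∧ crestBC A B C s ∈ τ}

/- ### Promotion apparatus -/

/-- The comultiplication `δ_A : !A → !!A`: copy-cat along the pairing bijection. -/
def delta (A : LGame L) : Set (List (hM (bang A) (bang (bang A)))) :=
  copycat (bang A) (bang (bang A)) (fun p => (Nat.pair p.1 p.2.1, p.2.2))

-- Restriction of a play of `!A ⊸ !B` to the `i`-th index, as a play of `A ⊸ B`.
open Classical in
noncomputable def bhres (A B : LGame L) (i : ℕ) (s : List (hM (bang A) (bang B))) :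
    List (hM A B) :=
  s.filterMap fun m => match m with
    | .inl (b, (k, a)) =>
        if h : b.1.1 = i ∧ k = i ∧ B.just b.1.2 = none
        then some (.inl (⟨b.1.2, h.2.2⟩, a)) else none
    | .inr (j, b) => if j = i then some (.inr b) else none

/-- The functorial action `!σ : !A → !B`: play `σ` componentwise in each index. -/
noncomputable def bangStrat (A B : LGame L) (σ : Set (List (hM A B))) :
    Set (List (hM (bang A) (bang B))) :=
  {s | s ∈ hpos (bang A) (bang B) ∧
       (∀ p ∈ s, ∀ b i a, p = Sum.inl (b, (i, a)) → b.1.1 = i) ∧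
       ∀ i : ℕ, bhres A B i s ∈ σ}

/- ### No-flow -/

/-- A strategy on `(A ⊗ C) ⊸ B` plays a move in `A`. -/
def PlaysInA (A C B : LGame L) (σ : Set (List (hM (tensor A C) B))) : Prop :=
  ∃ s ∈ σ, ∃ (b : B.Init) (a : A.M), (Sum.inl (b, Sum.inl a) : hM (tensor A C) B) ∈ s

/-- `A ↛ B`: every strategy `A ⊗ C → B` factors through the projection to `C`
(the composite of `⊤_A ⊗ id_C` with the canonical iso `I ⊗ C ≅ C`, which is the
copy-cat between the `C`-component of `A ⊗ C` and `C`). -/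
def NotFlow (A B : LGame L) : Prop :=
  ∀ C : LGame L, C.Valid → ∀ f, IsStrategy (lhom (tensor A C) B) f →
    ∃ g, IsStrategy (lhom C B) g ∧
      f = comp (tensor A C) C B (copycat (tensor A C) C Sum.inr) g

end LGame

end AJM

/-!
Let `𝔹` be the game with one Opponent question and two Player answers, all at level `⊥`, and
`σ_b : I → 𝔹` the strategy giving answer `b`. In `T_ℓ 𝔹 ⊸ T_ℓ' 𝔹` the level condition forbids
every move in the left component: the first such move would be an initial move of level `ℓ`
justified by the opening question, of level `ℓ'`, and `ℓ ≰ ℓ'`. Hence `σ_b ; τ_𝔹` consists of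
plays of `τ_𝔹` alone, while `τ_I ; σ_b` contains the answer `b`, since `τ_I` contains the empty
play. Naturality thus makes `τ_𝔹` give both answers to the same question, against determinacy.
-/

theorem List.exists_eq_map_inr_of_forall_isRight {α β : Type} :
    ∀ {s : List (α ⊕ β)}, (∀ x ∈ s, x.isRight) → ∃ l : List β, s = l.map Sum.inr
  | [], _ => ⟨[], rfl⟩
  | .inl _ :: _, h => absurd (h _ List.mem_cons_self) (by simp)
  | .inr m :: s, h => by
    obtain ⟨l, rfl⟩ := exists_eq_map_inr_of_forall_isRight (s := s) fun x hx => h x (by simp [hx])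
    exact ⟨m :: l, rfl⟩

theorem List.eq_of_append_pair_eq_pair {α : Type} {s : List α} {a b x y : α}
    (h : s ++ [a, b] = [x, y]) : s = [] ∧ a = x ∧ b = y := by
  obtain rfl : s = [] := by simpa using congrArg List.length h
  simpa using h

namespace AJM

theorem ValidSeq.of_prefix {M : Type} {lab : M → Pol × QA} {just : M → Option M}
    {s t : List M} (hst : s <+: t) (ht : ValidSeq lab just t) : ValidSeq lab just s := by
  obtain ⟨r, rfl⟩ := hst
  obtain ⟨hhead, hchain, hnodup, ⟨w, hw, hwb⟩, hjust⟩ := ht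
  refine ⟨fun m hm => hhead m ?_, (List.isChain_append.mp hchain).1,
    hnodup.sublist (List.sublist_append_left s r), ⟨w, (List.prefix_append s r).trans hw, hwb⟩,
    fun s₁ m s₂ he => hjust s₁ m (s₂ ++ r) (by simp [he])⟩
  cases s with
  | nil => simp at hm
  | cons a s => simpa using hm

theorem validSeq_pair {M : Type} {lab : M → Pol × QA} {just : M → Option M} {q a : M}
    (hq : lab q = (.O, .Q)) (ha : lab a = (.P, .Ans)) (hjq : just q = none)
    (hja : just a = some q) : ValidSeq lab just [q, a] := by
  have hqa : q ≠ a := fun h => by simp [h, ha] at hq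
  refine ⟨fun m hm => by simp_all, List.isChain_pair.mpr (by simp [hq, ha]), by simp [hqa],
    ⟨[q, a], List.prefix_rfl, by simpa using WB.wrap a q [] (by simp [ha]) hja WB.nil⟩, ?_⟩
  rintro (_ | ⟨x, _ | ⟨y, l⟩⟩) m s₂ he m' hm'
  · obtain ⟨rfl, -⟩ := List.cons_eq_cons.mp he
    simp [hjq] at hm'
  · simp only [List.cons_append, List.nil_append, List.cons.injEq] at he
    obtain ⟨rfl, rfl, rfl⟩ := he
    simp_all
  · simpa using congrArg List.length he

theorem LevelOK.of_prefix {M L : Type} [SemilatticeSup L] {lev : M → L} {just : M → Option M}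
    {s t : List M} (hst : s <+: t) (ht : LevelOK lev just t) : LevelOK lev just s :=
  fun m hm => ht m (hst.subset hm)

namespace LGame

theorem IsStrategy.nil_mem {L : Type} {A : LGame L} {σ : Set (List A.M)} (hσ : IsStrategy A σ) :
    [] ∈ σ := by
  obtain ⟨s, hs⟩ := hσ.nonempty
  induction hn : s.length using Nat.strong_induction_on generalizing s with
  | _ n ih =>
    rcases s.eq_nil_or_concat' with rfl | ⟨s₁, b, rfl⟩
    · exact hs
    rcases s₁.eq_nil_or_concat' with rfl | ⟨s₂, a, rfl⟩
    · simpa using hσ.even_length _ hs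
    exact ih s₂.length (by simp [← hn]) _ (hσ.causal _ _ _ (by simpa using hs)) rfl

section Composition

variable {L : Type} (A B C : LGame L)

@[simp]
theorem hrestB_map_inr (l : List C.M) : hrestB A C (l.map Sum.inr) = l := by
  induction l <;> simp_all [hrestB]

@[simp]
theorem crestAB_map_inr (l : List C.M) : crestAB A B C (l.map Sum.inr) = [] := by
  induction l <;> simp_all [crestAB]

@[simp]
theorem crestBC_map_inr (l : List C.M) : crestBC A B C (l.map Sum.inr) = l.map Sum.inr := by
  induction l <;> simp_all [crestBC]

@[simp]
theorem crestAC_map_inr (l : List C.M) : crestAC A B C (l.map Sum.inr) = l.map Sum.inr := by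
  induction l <;> simp_all [crestAC]

variable {A B C} {σ : Set (List (hM A B))} {τ : Set (List (hM B C))} {l : List C.M}

theorem map_inr_mem_comp (hσ : [] ∈ σ) (hτ : l.map Sum.inr ∈ τ) :
    l.map Sum.inr ∈ comp A B C σ τ :=
  ⟨l.map Sum.inr, by simp, by simpa using hσ, by simpa using hτ⟩

theorem map_inr_mem_of_mem_comp (hτ : ∀ t ∈ τ, ∀ x ∈ t, x.isRight)
    (hl : l.map Sum.inr ∈ comp A B C σ τ) : l.map Sum.inr ∈ τ := by
  obtain ⟨s, hAC, -, hBC⟩ := hl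
  have hs : ∀ x ∈ s, x.isRight := by
    rintro (⟨c, ⟨_, a⟩ | b⟩ | m) hx
    · have : (.inl (c, a) : hM A C) ∈ crestAC A B C s := List.mem_filterMap.mpr ⟨_, hx, rfl⟩
      simp [← hAC] at this
    · have : (.inl (c, b) : hM B C) ∈ crestBC A B C s := List.mem_filterMap.mpr ⟨_, hx, rfl⟩
      simpa using hτ _ hBC _ this
    · rfl
  obtain ⟨l', rfl⟩ := List.exists_eq_map_inr_of_forall_isRight hs
  obtain rfl : l' = l :=
    List.map_injective_iff.mpr Sum.inr_injective (by simpa using hAC.symm)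
  simpa using hBC

end Composition

section Levels

variable {L : Type} [SemilatticeSup L]

theorem hpos_prefix_closed {A B : LGame L}
    (hA : ∀ s t : List A.M, s <+: t → t ∈ A.pos → s ∈ A.pos)
    (hB : ∀ s t : List B.M, s <+: t → t ∈ B.pos → s ∈ B.pos)
    {s t : List (hM A B)} (hst : s <+: t) (ht : t ∈ hpos A B) : s ∈ hpos A B :=
  ⟨ht.1.of_prefix hst, ht.2.1.of_prefix hst, hA _ _ (hst.filterMap _) ht.2.2.1,
    hB _ _ (hst.filterMap _) ht.2.2.2⟩

/-- Under `A ▷ B` the level condition (p6) forbids every move of `A` in `A ⊸ B`: the first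
such move would be initial in `A` and justified by an initial move of `B`. -/
theorem forall_isRight_of_mem_hpos {A B : LGame L} (hAB : Rhd A B) {s : List (hM A B)}
    (hs : s ∈ hpos A B) : ∀ x ∈ s, x.isRight := by
  obtain ⟨⟨-, -, -, -, hbefore⟩, hlev, -, -⟩ := hs
  induction s using List.reverseRecOn with
  | nil => simp
  | append_singleton t x ih =>
    have ht := ih (fun s₁ m s₂ he => hbefore s₁ m (s₂ ++ [x]) (by simp [he]))
      (hlev.of_prefix (List.prefix_append t [x]))
    simp only [List.mem_append, List.mem_singleton]
    rintro y (hy | rfl)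
    · exact ht y hy
    rcases y with ⟨c, a⟩ | m
    · cases ha : A.just a with
      | some a' => simpa using ht (.inl (c, a')) (hbefore t _ [] rfl _ (by simp [hjust, ha]))
      | none =>
        have hle := hlev (.inl (c, a)) (by simp) (.inr c.1) (by simp [hjust, ha])
        exact (hAB _ ⟨a, ha, rfl⟩ _ ⟨_, c.2, rfl⟩ hle).elim
    · rfl

theorem Valid.T {A : LGame L} (hA : A.Valid) (ℓ : L) : (T ℓ A).Valid :=
  { hA with
    pos_level := fun s hs m hm m' hm' => sup_le_sup_right (hA.pos_level s hs m hm m' hm') ℓ }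

theorem answer_mem_hpos {A B : LGame L} (hA : [] ∈ A.pos) {q a : B.M}
    (hq : B.lab q = (.O, .Q)) (ha : B.lab a = (.P, .Ans)) (hjq : B.just q = none)
    (hja : B.just a = some q) (hlev : B.lev a ≤ B.lev q) (hqa : [q, a] ∈ B.pos) :
    [.inr q, .inr a] ∈ hpos A B := by
  refine ⟨validSeq_pair hq ha (by simp [hjust, hjq]) (by simp [hjust, hja]), ?_, hA, hqa⟩
  rintro _ (_ | ⟨_, _ | ⟨_, ⟨⟩⟩⟩) m' hm'
  · simp [hjust, hjq] at hm'
  · obtain rfl : m' = .inr q := by simpa [hjust, hja] using hm'.symm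
    exact hlev

theorem iGame_valid : (iGame (L := L)).Valid where
  just_wf := ⟨fun m => m.elim⟩
  just_pol m := m.elim
  just_qa m := m.elim
  ans_justified m := m.elim
  pos_nonempty := ⟨[], rfl⟩
  pos_prefix_closed _ _ hst ht := List.prefix_nil.mp (ht ▸ hst)
  pos_valid := by
    rintro _ rfl
    exact ⟨fun m => m.elim, List.isChain_nil, List.nodup_nil, ⟨[], List.prefix_rfl, WB.nil⟩,
      fun _ m => m.elim⟩
  pos_level _ _ m := m.elim
  equiv_mem _ _ h := h
  equiv_refl _ hs := ⟨hs, hs⟩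
  equiv_symm _ _ h := h.symm
  equiv_trans _ _ _ h h' := ⟨h.1, h'.2⟩
  equiv_lab _ _ h := by rw [h.1, h.2]
  equiv_prefix _ _ _ _ h hs ht _ := ⟨List.prefix_nil.mp (h.1 ▸ hs), List.prefix_nil.mp (h.2 ▸ ht)⟩
  equiv_ext _ _ m := m.elim

end Levels

section Counterexample

variable {L : Type} [SemilatticeSup L] [OrderBot L]

theorem rhd_T_of_levelSet_subset_bot {A B : LGame L} (hA : LevelSet A ⊆ {⊥})
    (hB : LevelSet B ⊆ {⊥}) {ℓ ℓ' : L} (h : ¬ℓ ≤ ℓ') : Rhd (T ℓ A) (T ℓ' B) := by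
  rintro _ ⟨a, ha, rfl⟩ _ ⟨b, hb, rfl⟩
  have hla : A.lev a = ⊥ := hA ⟨a, ha, rfl⟩
  have hlb : B.lev b = ⊥ := hB ⟨b, hb, rfl⟩
  simpa [T, hla, hlb] using h

variable (L) in
def boolGame : LGame L where
  M := Option Bool
  lab := fun | none => (.O, .Q) | some _ => (.P, .Ans)
  just := fun | none => none | some _ => some none
  lev := fun _ => ⊥
  pos := {s | ∃ b : Bool, s <+: [none, some b]}
  equiv := fun s t => s = t ∧ ∃ b : Bool, s <+: [none, some b]

theorem boolGame_pos_prefix_closed (s t : List (Option Bool)) (hst : s <+: t)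
    (ht : t ∈ (boolGame L).pos) : s ∈ (boolGame L).pos :=
  ht.imp fun _ h => hst.trans h

theorem boolGame_valid : (boolGame L).Valid where
  just_wf := by
    have hnone : Acc (fun m m' => (boolGame L).just m' = some m) none :=
      ⟨_, fun _ h => by simp [boolGame] at h⟩
    exact ⟨fun | none => hnone | some _ => ⟨_, fun _ h => Option.some.inj h ▸ hnone⟩⟩
  just_pol := by rintro (_ | _) (_ | _) h <;> simp_all [boolGame]
  just_qa := by rintro (_ | _) (_ | _) h <;> simp_all [boolGame]
  ans_justified := by rintro (_ | _) h <;> simp_all [boolGame]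
  pos_nonempty := ⟨[], false, List.nil_prefix⟩
  pos_prefix_closed := boolGame_pos_prefix_closed (L := L)
  pos_valid := by
    rintro s ⟨b, hs⟩
    exact ValidSeq.of_prefix hs (validSeq_pair (q := none) (a := some b) rfl rfl rfl rfl)
  pos_level _ _ _ _ _ _ := le_rfl
  equiv_mem := by
    rintro s t ⟨rfl, hs⟩
    exact ⟨hs, hs⟩
  equiv_refl _ hs := ⟨rfl, hs⟩
  equiv_symm := by
    rintro s t ⟨rfl, hs⟩
    exact ⟨rfl, hs⟩
  equiv_trans := by
    rintro s t u ⟨rfl, hs⟩ ⟨rfl, -⟩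
    exact ⟨rfl, hs⟩
  equiv_lab := by
    rintro s t ⟨rfl, -⟩
    rfl
  equiv_prefix := by
    rintro s t s' t' ⟨rfl, hs⟩ hs' ht' hlen
    have hst' : s' = t' := by
      rcases le_total s'.length t'.length with hle | hle
      · exact (List.prefix_of_prefix_length_le hs' ht' hle).eq_of_length hlen
      · exact ((List.prefix_of_prefix_length_le ht' hs' hle).eq_of_length hlen.symm).symm
    show s' = t' ∧ _
    exact ⟨hst', boolGame_pos_prefix_closed (L := L) _ _ hs' hs⟩
  equiv_ext := by
    rintro s t a ⟨rfl, -⟩ hsa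
    exact ⟨a, rfl, hsa⟩

theorem levelSet_boolGame_subset : LevelSet (boolGame L) ⊆ {⊥} := by
  rintro _ ⟨_, _, rfl⟩
  rfl

theorem boolGame_answer_mem_hpos {A : LGame L} (hA : [] ∈ A.pos) (ℓ : L) (b : Bool) :
    [.inr none, .inr (some b)] ∈ hpos A (T ℓ (boolGame L)) :=
  answer_mem_hpos hA rfl rfl rfl rfl le_rfl ⟨b, List.prefix_rfl⟩

theorem eq_of_boolGame_answers_mem {A : LGame L} (hA : A.Valid) {ℓ : L}
    {τ : Set (List (hM A (T ℓ (boolGame L))))} (hτ : IsStrategy (lhom A (T ℓ (boolGame L))) τ)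
    {b b' : Bool} (hb : [.inr none, .inr (some b)] ∈ τ) (hb' : [.inr none, .inr (some b')] ∈ τ) :
    b = b' := by
  obtain ⟨s, hs⟩ := hA.pos_nonempty
  have hnil : [] ∈ A.pos := hA.pos_prefix_closed _ _ List.nil_prefix hs
  have hq : [.inr none] ∈ hpos A (T ℓ (boolGame L)) :=
    hpos_prefix_closed hA.pos_prefix_closed (boolGame_pos_prefix_closed (L := L)) ⟨_, rfl⟩
      (boolGame_answer_mem_hpos hnil ℓ b)
  have hqq : (lhom A (T ℓ (boolGame L))).equiv [.inr none] [.inr none] :=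
    ⟨hq, hq, fun _ => hA.equiv_refl _ hnil, ⟨rfl, b, [some b], rfl⟩, rfl⟩
  have hbb' : ([none, some b] : List (Option Bool)) = [none, some b'] :=
    (hτ.det [] [] _ _ _ _ hb hb' hqq).2.2.2.1.1
  simpa using hbb'

variable (L) in
def answer (b : Bool) : Set (List (hM (iGame (L := L)) (boolGame L))) :=
  {[], [.inr none, .inr (some b)]}

theorem answer_isStrategy (b : Bool) : IsStrategy (lhom iGame (boolGame L)) (answer L b) := by
  have hpair : [.inr none, .inr (some b)] ∈ hpos (iGame (L := L)) (boolGame L) :=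
    answer_mem_hpos (A := iGame) rfl rfl rfl rfl rfl le_rfl ⟨b, List.prefix_rfl⟩
  have hpair_equiv : (lhom iGame (boolGame L)).equiv [.inr none, .inr (some b)]
      [.inr none, .inr (some b)] :=
    ⟨hpair, hpair, fun _ => ⟨rfl, rfl⟩, ⟨rfl, b, List.prefix_rfl⟩, rfl⟩
  have hpair_of_append {s a c} (h : s ++ [a, c] ∈ answer L b) :
      s = [] ∧ a = .inr none ∧ c = .inr (some b) := by
    rcases h with h | h
    · simpa using congrArg List.length h
    · exact List.eq_of_append_pair_eq_pair h
  refine ⟨?_, ?_, ⟨[], .inl rfl⟩, fun s a c h => ?_, ?_, ?_⟩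
  · rintro _ (rfl | rfl)
    · exact hpos_prefix_closed iGame_valid.pos_prefix_closed (boolGame_pos_prefix_closed (L := L))
        List.nil_prefix hpair
    · exact hpair
  · rintro _ (rfl | rfl)
    exacts [⟨0, rfl⟩, ⟨1, rfl⟩]
  · rw [(hpair_of_append h).1]
    exact .inl rfl
  · rintro s t (rfl | rfl) ⟨-, -, -, hB, htags⟩
    · exact .inl (List.map_eq_nil_iff.mp htags.symm)
    · have ht : ∀ x ∈ t, x.isRight := fun x hx => by
        have hx' : htag _ _ x ∈ [.inr none, .inr (some b)].map (htag _ _) :=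
          htags ▸ List.mem_map_of_mem hx
        rcases x with _ | _ <;> simp [htag] at hx' ⊢
      obtain ⟨l, rfl⟩ := List.exists_eq_map_inr_of_forall_isRight ht
      simp only [hrestB_map_inr] at hB
      exact .inr (by rw [← hB.1]; rfl)
  · rintro s t a c a' c' hs ht -
    obtain ⟨rfl, rfl, rfl⟩ := hpair_of_append hs
    obtain ⟨rfl, rfl, rfl⟩ := hpair_of_append ht
    exact hpair_equiv

end Counterexample

end LGame

end AJM

open AJM LGame in
/-- If `¬(ℓ ≤ ℓ')`, there is no natural transformation `T_ℓ → T_ℓ'` on the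
category of `L`-levelled games and strategies: no family of strategies
`τ A : T_ℓ A → T_ℓ' A` such that `(T_ℓ σ) ; τ_B = τ_A ; (T_ℓ' σ)` for every
strategy `σ : A → B` (recall `T_ℓ σ = σ` as a set of plays). -/
theorem no_natural_transformation {L : Type} [SemilatticeSup L] [OrderBot L]
    (ℓ ℓ' : L) (h : ¬ ℓ ≤ ℓ') :
    ¬ ∃ τ : (A : LGame L) → Set (List (hM (T ℓ A) (T ℓ' A))),
        (∀ A : LGame L, A.Valid → IsStrategy (lhom (T ℓ A) (T ℓ' A)) (τ A)) ∧
        (∀ A B : LGame L, A.Valid → B.Valid →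
          ∀ σ : Set (List (hM A B)), IsStrategy (lhom A B) σ →
            comp (T ℓ A) (T ℓ B) (T ℓ' B) σ (τ B) =
            comp (T ℓ A) (T ℓ' A) (T ℓ' B) (τ A) σ) := by
  rintro ⟨τ, hτ, hnat⟩
  have hrhd : Rhd (T ℓ (boolGame L)) (T ℓ' (boolGame L)) :=
    rhd_T_of_levelSet_subset_bot levelSet_boolGame_subset levelSet_boolGame_subset h
  have hτ_right : ∀ t ∈ τ (boolGame L), ∀ x ∈ t, x.isRight := fun t ht =>
    forall_isRight_of_mem_hpos hrhd ((hτ _ boolGame_valid).subset_pos ht)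
  have hτ_answers (b : Bool) : [.inr none, .inr (some b)] ∈ τ (boolGame L) := by
    have hmem := map_inr_mem_comp (C := T ℓ' (boolGame L)) (hτ iGame iGame_valid).nil_mem
      (show [none, some b].map Sum.inr ∈ answer L b from .inr rfl)
    rw [← hnat _ _ iGame_valid boolGame_valid _ (answer_isStrategy b)] at hmem
    exact map_inr_mem_of_mem_comp hτ_right hmem
  exact Bool.false_ne_true <| eq_of_boolGame_answers_mem (boolGame_valid.T ℓ) (hτ _ boolGame_valid)
    (hτ_answers false) (hτ_answers true)
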